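/- For indices i, k with k ≠ i and k ≠ σ(i), and a ∈ R with 2 invertible in R, se_{i,σ(i)}(a) = [se_{ik}(a/2), se_{k,σ(i)}(1)]. -/

import Mathlib

open Matrix

/-- The involution `σ` pairing `2i-1 ↔ 2i` (in 0-indexed form: `2i ↔ 2i+1`).
For even `m` this is exactly the permutation `σ(2i)=2i-1, σ(2i-1)=2i` of the paper. -/
def sesig {m : ℕ} (k : Fin m) : Fin m :=
  if h : (k : ℕ) % 2 = 0 ∧ (k : ℕ) + 1 < m then ⟨(k : ℕ) + 1, h.2⟩
  else ⟨(k : ℕ) - 1, by have := k.2; omega⟩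

/-- The elementary symplectic generator `se_{ij}(z)`. -/
def se {m : ℕ} {R : Type*} [CommRing R] (i j : Fin m) (z : R) :
    Matrix (Fin m) (Fin m) R :=
  if i = sesig j then 1 + Matrix.single i j z
  else 1 + Matrix.single i j z
    - (-1 : R) ^ ((i : ℕ) + (j : ℕ)) • Matrix.single (sesig j) (sesig i) z

/-- The standard symplectic form `ψₙ = Σ e_{2i-1,2i} - Σ e_{2i,2i-1}`. -/
def psi {m : ℕ} (R : Type*) [CommRing R] : Matrix (Fin m) (Fin m) R :=
  Matrix.of fun k l => if l = sesig k then (if (k : ℕ) % 2 = 0 then 1 else -1) else 0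

/-!
Write `u = 1 + A` and `v = 1 + B`. As `k ∉ {i, σ(i)}`, both `A` and `B` square to zero, and they
anticommute with `A B = e_{i σ(i)}(a/2)`; the sign comes from `i + σ(i)` being odd. For such a
pair the commutator `(1 + A)(1 + B)(1 - A)(1 - B)` collapses to `1 + 2 A B = se_{i σ(i)}(a)`.
-/

section Commutator

variable {α : Type*} [Ring α] {A B : α}

theorem Units.val_inv_eq_one_sub_of_mul_self_eq_zero {u : αˣ} (hu : (u : α) = 1 + A)
    (hA : A * A = 0) : ((u⁻¹ : αˣ) : α) = 1 - A :=
  Units.inv_eq_of_mul_eq_one_right <| by rw [hu, mul_sub, mul_one, add_mul, one_mul, hA]; abel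

theorem Units.val_commutator_of_anticommute_of_mul_self_eq_zero {u v : αˣ}
    (hu : (u : α) = 1 + A) (hv : (v : α) = 1 + B) (hA : A * A = 0) (hB : B * B = 0)
    (hBA : B * A = -(A * B)) :
    ((u * v * u⁻¹ * v⁻¹ : αˣ) : α) = 1 + 2 • (A * B) := by
  have hvu : (1 + B) * (1 - A) = 1 - A + B + A * B := by
    rw [mul_sub, mul_one, add_mul, one_mul, hBA]; abel
  have huvu : (1 + A) * (1 - A + B + A * B) = 1 + B + 2 • (A * B) := by
    simp only [mul_add, mul_sub, add_mul, one_mul, mul_one, hA, ← mul_assoc, zero_mul]; abel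
  have hcomm : (1 + B + 2 • (A * B)) * (1 - B) = 1 + 2 • (A * B) := by
    simp only [mul_sub, add_mul, one_mul, mul_one, smul_mul_assoc, mul_assoc, hB, mul_zero,
      smul_zero]; abel
  rw [Units.val_mul, Units.val_mul, Units.val_mul,
    Units.val_inv_eq_one_sub_of_mul_self_eq_zero hu hA,
    Units.val_inv_eq_one_sub_of_mul_self_eq_zero hv hB, hu, hv, ← hcomm, ← huvu, ← hvu]
  noncomm_ring

end Commutator

section Sesig

variable {n : ℕ}

theorem val_sesig (i : Fin (2 * n)) :
    ((sesig i : Fin (2 * n)) : ℕ) =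
      if (i : ℕ) % 2 = 0 then (i : ℕ) + 1 else (i : ℕ) - 1 := by
  unfold sesig
  split_ifs <;> first | rfl | omega

theorem sesig_sesig (i : Fin (2 * n)) : sesig (sesig i) = i := by
  ext
  rw [val_sesig, val_sesig]
  split_ifs <;> omega

theorem sesig_injective : Function.Injective (sesig : Fin (2 * n) → Fin (2 * n)) :=
  Function.LeftInverse.injective sesig_sesig

theorem sesig_ne_self (i : Fin (2 * n)) : sesig i ≠ i := by
  intro h
  have := congrArg Fin.val h
  rw [val_sesig] at this
  split_ifs at this <;> omega

theorem self_ne_sesig (i : Fin (2 * n)) : i ≠ sesig i :=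
  (sesig_ne_self i).symm

theorem odd_val_add_val_sesig (i : Fin (2 * n)) : Odd ((i : ℕ) + (sesig i : ℕ)) := by
  rw [Nat.odd_iff, val_sesig]
  split_ifs <;> omega

end Sesig

section Generators

variable {n : ℕ} {R : Type*} [CommRing R]

def seNil (i j : Fin (2 * n)) (z : R) : Matrix (Fin (2 * n)) (Fin (2 * n)) R :=
  single i j z - (-1 : R) ^ ((i : ℕ) + (j : ℕ)) • single (sesig j) (sesig i) z

theorem se_eq_one_add_seNil {i j : Fin (2 * n)} (h : i ≠ sesig j) (z : R) :
    se i j z = 1 + seNil i j z := by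
  rw [se, if_neg h, seNil, add_sub_assoc]

theorem se_of_eq_sesig {i j : Fin (2 * n)} (h : i = sesig j) (z : R) :
    se i j z = 1 + single i j z := by
  rw [se, if_pos h]

theorem seNil_mul_seNil_self {i j : Fin (2 * n)} (h : i ≠ j) (z w : R) :
    seNil i j z * seNil i j w = 0 := by
  have hσ : sesig i ≠ sesig j := sesig_injective.ne h
  simp [seNil, sub_mul, mul_sub, h.symm, hσ, sesig_ne_self, self_ne_sesig]

variable {i k : Fin (2 * n)}

theorem seNil_mul_seNil (hki : k ≠ i) (hksi : k ≠ sesig i) (z w : R) :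
    seNil i k z * seNil k (sesig i) w = single i (sesig i) (z * w) := by
  simp [seNil, sub_mul, mul_sub, sesig_sesig, hki, Ne.symm hksi, sesig_ne_self]

theorem seNil_mul_seNil_swap (hki : k ≠ i) (hksi : k ≠ sesig i) (z w : R) :
    seNil k (sesig i) w * seNil i k z = -single i (sesig i) (z * w) := by
  have hσ : sesig i ≠ sesig k := sesig_injective.ne (Ne.symm hki)
  have hσk : sesig k ≠ i := fun h => hksi (by rw [← h, sesig_sesig])
  have hsign : (-1 : R) ^ ((k : ℕ) + (sesig i : ℕ)) * (-1 : R) ^ ((i : ℕ) + (k : ℕ)) = -1 :=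
    (pow_add _ _ _).symm.trans <| Odd.neg_one_pow <| by
      obtain ⟨m, hm⟩ := odd_val_add_val_sesig i
      exact ⟨m + k, by omega⟩
  simp only [seNil, sesig_sesig, smul_single, smul_eq_mul, mul_sub, sub_mul, ne_eq, sesig_ne_self,
    not_false_eq_true, single_mul_single_of_ne, hσk, sub_self, hσ, single_mul_single_same,
    zero_sub, sub_neg_eq_add, zero_add]
  rw [single_neg]
  congr 1
  linear_combination z * w * hsign

end Generators

/-- `se_{i,σ(i)}(a) = [se_{ik}(a/2), se_{k,σ(i)}(1)]` for `k ≠ i, σ(i)`, with `2` invertible. -/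
theorem se_short_as_commutator {n : ℕ} {R : Type*} [CommRing R] [Invertible (2 : R)]
    (i k : Fin (2 * n)) (hki : k ≠ i) (hksi : k ≠ sesig i) (a : R)
    (u v : (Matrix (Fin (2 * n)) (Fin (2 * n)) R)ˣ)
    (hu : (u : Matrix (Fin (2 * n)) (Fin (2 * n)) R) = se i k (⅟(2 : R) * a))
    (hv : (v : Matrix (Fin (2 * n)) (Fin (2 * n)) R) = se k (sesig i) 1) :
    se i (sesig i) a
      = ((u * v * u⁻¹ * v⁻¹ : (Matrix (Fin (2 * n)) (Fin (2 * n)) R)ˣ) :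
          Matrix (Fin (2 * n)) (Fin (2 * n)) R) := by
  have hσk : i ≠ sesig k := fun h => hksi (by rw [h, sesig_sesig])
  have hσσ : k ≠ sesig (sesig i) := by rwa [sesig_sesig]
  rw [Units.val_commutator_of_anticommute_of_mul_self_eq_zero
      (hu.trans (se_eq_one_add_seNil hσk _)) (hv.trans (se_eq_one_add_seNil hσσ _))
      (seNil_mul_seNil_self (Ne.symm hki) _ _) (seNil_mul_seNil_self hksi _ _)
      (by rw [seNil_mul_seNil hki hksi, seNil_mul_seNil_swap hki hksi]),
    seNil_mul_seNil hki hksi, smul_single, nsmul_eq_mul, Nat.cast_ofNat, mul_one,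
    mul_invOf_cancel_left, se_of_eq_sesig (sesig_sesig i).symm]
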